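/- Rotational null-form estimate, second null condition (Lemma 4.2, inequality (4.6)): Let h^{ijkl} (i,j,k,l ∈ {1,2}) be real constants satisfying Σ h^{ijkl} ω_i ω_j ω_k ω_l = 0 for every unit vector ω = (ω_1, ω_2) ∈ ℝ². Then there is a constant C > 0 (depending only on h) such that for all smooth functions φ, ψ, χ, ξ on a neighborhood of a point x ∈ ℝ² with x ≠ 0, writing r = |x|: |Σ h^{ijkl} ∂_i φ ∂_j ψ ∂_k χ ∂_l ξ| ≤ C r^{−1} ( |Ωφ| |∂ψ| |∂χ| |∂ξ| + |∂φ| |Ωψ| |∂χ| |∂ξ| + |∂φ| |∂ψ| |Ωχ| |∂ξ| + |∂φ| |∂ψ| |∂χ| |Ωξ| ), all quantities evaluated at x. -/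

import Mathlib

open MeasureTheory

noncomputable section

namespace Paper

/-- Two-dimensional Euclidean space. -/
abbrev Pt2 := EuclideanSpace ℝ (Fin 2)

/-- Time derivative ∂_t. -/
def tD (φ : ℝ → Pt2 → ℝ) : ℝ → Pt2 → ℝ := fun t x => deriv (fun s => φ s x) t

/-- Spatial derivative ∂_i (i = 1,2). -/
def xD (i : Fin 2) (φ : ℝ → Pt2 → ℝ) : ℝ → Pt2 → ℝ :=
  fun t x => fderiv ℝ (fun y => φ t y) x (EuclideanSpace.single i 1)

/-- First-order space-time derivatives: ∂_0 = ∂_t, ∂_1, ∂_2. -/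
def pD : Fin 3 → (ℝ → Pt2 → ℝ) → ℝ → Pt2 → ℝ := ![tD, xD 0, xD 1]

/-- Scaling field S = t∂_t + r∂_r = t∂_t + x·∇. -/
def sD (φ : ℝ → Pt2 → ℝ) : ℝ → Pt2 → ℝ :=
  fun t x => t * tD φ t x + x 0 * xD 0 φ t x + x 1 * xD 1 φ t x

/-- Rotation field Ω = x₂∂₁ − x₁∂₂. -/
def oD (φ : ℝ → Pt2 → ℝ) : ℝ → Pt2 → ℝ :=
  fun t x => x 1 * xD 0 φ t x - x 0 * xD 1 φ t x

/-- Radial derivative ∂_r = (x/r)·∇. -/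
def rD (φ : ℝ → Pt2 → ℝ) : ℝ → Pt2 → ℝ :=
  fun t x => (x 0 * xD 0 φ t x + x 1 * xD 1 φ t x) / ‖x‖

/-- The five admissible vector fields Γ ∈ {∂_t, ∂_1, ∂_2, S, Ω}. -/
inductive VF : Type
  | t | x1 | x2 | s | om
  deriving DecidableEq

instance : Fintype VF where
  elems := {VF.t, VF.x1, VF.x2, VF.s, VF.om}
  complete := by intro x; cases x <;> simp

/-- Action of a vector field Γ on a function. -/
def VF.apply : VF → (ℝ → Pt2 → ℝ) → ℝ → Pt2 → ℝ
  | .t => tD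
  | .x1 => xD 0
  | .x2 => xD 1
  | .s => sD
  | .om => oD

/-- Iterated vector fields Γ^α for a word α. -/
def GammaIter : List VF → (ℝ → Pt2 → ℝ) → ℝ → Pt2 → ℝ
  | [], φ => φ
  | v :: l, φ => v.apply (GammaIter l φ)

/-- Γ^α for a multi-index α of length k. -/
def GammaW {k : ℕ} (α : Fin k → VF) (φ : ℝ → Pt2 → ℝ) : ℝ → Pt2 → ℝ :=
  GammaIter (List.ofFn α) φ

/-- Japanese bracket ⟨s⟩ = (1 + s²)^{1/2}. -/
def jb (s : ℝ) : ℝ := Real.sqrt (1 + s ^ 2)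

/-- Spatial L² norm. -/
def L2 (f : Pt2 → ℝ) : ℝ := Real.sqrt (∫ x : Pt2, (f x) ^ 2)

/-- κ-th order generalized energy E_κ(φ)(t). -/
def Ek (κ : ℕ) (φ : ℝ → Pt2 → ℝ) (t : ℝ) : ℝ :=
  (1/2) * ∑ k ∈ Finset.range κ, ∑ α : Fin k → VF,
    ∫ x : Pt2, ((tD (GammaW α φ) t x) ^ 2 + (xD 0 (GammaW α φ) t x) ^ 2
      + (xD 1 (GammaW α φ) t x) ^ 2)

/-- The d'Alembertian □φ = ∂_t²φ − Δφ. -/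
def waveOp (φ : ℝ → Pt2 → ℝ) : ℝ → Pt2 → ℝ :=
  fun t x => tD (tD φ) t x - (xD 0 (xD 0 φ) t x + xD 1 (xD 1 φ) t x)

/-- Spatial derivative ∂_i of a function on ℝ². -/
def xDs (i : Fin 2) (u : Pt2 → ℝ) : Pt2 → ℝ :=
  fun x => fderiv ℝ u x (EuclideanSpace.single i 1)

/-- Rotation derivative Ωu = x₂∂₁u − x₁∂₂u. -/
def oDs (u : Pt2 → ℝ) : Pt2 → ℝ := fun x => x 1 * xDs 0 u x - x 0 * xDs 1 u x

/-- |∂u|: maximum of the two spatial derivatives. -/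
def ndS (u : Pt2 → ℝ) (x : Pt2) : ℝ := max |xDs 0 u x| |xDs 1 u x|

/-- u is smooth on a neighborhood of the point x. -/
def SmoothNearS (u : Pt2 → ℝ) (x : Pt2) : Prop :=
  ∃ s ∈ nhds x, ContDiffOn ℝ (⊤ : ℕ∞) u s

def Tform (h : Fin 2 → Fin 2 → Fin 2 → Fin 2 → ℝ) (a b c d : Fin 2 → ℝ) : ℝ :=
  ∑ i : Fin 2, ∑ j : Fin 2, ∑ k : Fin 2, ∑ l : Fin 2, h i j k l * a i * b j * c k * d l

lemma Tform_bound (h : Fin 2 → Fin 2 → Fin 2 → Fin 2 → ℝ) (a b c d : Fin 2 → ℝ)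
    (A B C D : ℝ)
    (hA : ∀ i, |a i| ≤ A) (hB : ∀ i, |b i| ≤ B) (hC : ∀ i, |c i| ≤ C) (hD : ∀ i, |d i| ≤ D) :
    |Tform h a b c d| ≤
      (∑ i : Fin 2, ∑ j : Fin 2, ∑ k : Fin 2, ∑ l : Fin 2, |h i j k l|) * (A * B * C * D) := by
  have hA0 : 0 ≤ A := le_trans (abs_nonneg _) (hA 0)
  have hB0 : 0 ≤ B := le_trans (abs_nonneg _) (hB 0)
  have hC0 : 0 ≤ C := le_trans (abs_nonneg _) (hC 0)
  have hD0 : 0 ≤ D := le_trans (abs_nonneg _) (hD 0)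
  calc |Tform h a b c d|
      ≤ ∑ i : Fin 2, ∑ j : Fin 2, ∑ k : Fin 2, ∑ l : Fin 2,
          |h i j k l * a i * b j * c k * d l| := by
        refine (Finset.abs_sum_le_sum_abs _ _).trans (Finset.sum_le_sum fun i _ => ?_)
        refine (Finset.abs_sum_le_sum_abs _ _).trans (Finset.sum_le_sum fun j _ => ?_)
        refine (Finset.abs_sum_le_sum_abs _ _).trans (Finset.sum_le_sum fun k _ => ?_)
        exact Finset.abs_sum_le_sum_abs _ _
    _ ≤ ∑ i : Fin 2, ∑ j : Fin 2, ∑ k : Fin 2, ∑ l : Fin 2, |h i j k l| * A * B * C * D := by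
        refine Finset.sum_le_sum fun i _ => Finset.sum_le_sum fun j _ =>
          Finset.sum_le_sum fun k _ => Finset.sum_le_sum fun l _ => ?_
        rw [abs_mul, abs_mul, abs_mul, abs_mul]
        gcongr
        · exact hA i
        · exact hB j
        · exact hC k
        · exact hD l
    _ = (∑ i : Fin 2, ∑ j : Fin 2, ∑ k : Fin 2, ∑ l : Fin 2, |h i j k l|) * (A*B*C*D) := by
        simp only [Fin.sum_univ_two]; ring

lemma Tform_expand (h : Fin 2 → Fin 2 → Fin 2 → Fin 2 → ℝ) (ω e a b c d : Fin 2 → ℝ)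
    (p1 q1 p2 q2 p3 q3 p4 q4 : ℝ)
    (ha : ∀ i, a i = p1 * ω i + q1 * e i) (hb : ∀ i, b i = p2 * ω i + q2 * e i)
    (hc : ∀ i, c i = p3 * ω i + q3 * e i) (hd : ∀ i, d i = p4 * ω i + q4 * e i) :
    Tform h a b c d =
      Tform h (fun i => q1 * e i) b c d
      + Tform h (fun i => p1 * ω i) (fun i => q2 * e i) c d
      + Tform h (fun i => p1 * ω i) (fun i => p2 * ω i) (fun i => q3 * e i) d
      + Tform h (fun i => p1 * ω i) (fun i => p2 * ω i) (fun i => p3 * ω i) (fun i => q4 * e i)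
      + (p1*p2*p3*p4) * Tform h ω ω ω ω := by
  simp only [Tform, Fin.sum_univ_two, ha, hb, hc, hd]
  ring

/-- Lemma 4.2, inequality (4.6): rotational null-form estimate under the
  second null condition. -/
theorem rotational_null_form_second (h : Fin 2 → Fin 2 → Fin 2 → Fin 2 → ℝ)
    (hnull : ∀ ω : Fin 2 → ℝ, ω 0 ^ 2 + ω 1 ^ 2 = 1 →
      ∑ i : Fin 2, ∑ j : Fin 2, ∑ k : Fin 2, ∑ l : Fin 2,
        h i j k l * ω i * ω j * ω k * ω l = 0) :
    ∃ C : ℝ, 0 < C ∧ ∀ (x : Pt2) (φ ψ χ ξ : Pt2 → ℝ), x ≠ 0 →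
      SmoothNearS φ x → SmoothNearS ψ x → SmoothNearS χ x → SmoothNearS ξ x →
      |∑ i : Fin 2, ∑ j : Fin 2, ∑ k : Fin 2, ∑ l : Fin 2,
          h i j k l * xDs i φ x * xDs j ψ x * xDs k χ x * xDs l ξ x| ≤
        C * ‖x‖⁻¹ *
          (|oDs φ x| * ndS ψ x * ndS χ x * ndS ξ x
            + ndS φ x * |oDs ψ x| * ndS χ x * ndS ξ x
            + ndS φ x * ndS ψ x * |oDs χ x| * ndS ξ x
            + ndS φ x * ndS ψ x * ndS χ x * |oDs ξ x|) := by
  have hM0 : (0:ℝ) ≤ ∑ i : Fin 2, ∑ j : Fin 2, ∑ k : Fin 2, ∑ l : Fin 2, |h i j k l| :=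
    Finset.sum_nonneg fun i _ => Finset.sum_nonneg fun j _ =>
      Finset.sum_nonneg fun k _ => Finset.sum_nonneg fun l _ => abs_nonneg _
  refine ⟨8 * (∑ i : Fin 2, ∑ j : Fin 2, ∑ k : Fin 2, ∑ l : Fin 2, |h i j k l|) + 1,
    by linarith, ?_⟩
  intro x φ ψ χ ξ hx _ _ _ _
  set M : ℝ := ∑ i : Fin 2, ∑ j : Fin 2, ∑ k : Fin 2, ∑ l : Fin 2, |h i j k l| with hMdef
  set r : ℝ := ‖x‖ with hrdef
  have hr : 0 < r := norm_pos_iff.mpr hx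
  have hr2 : x 0 ^ 2 + x 1 ^ 2 = r ^ 2 := by
    have h1 : r ^ 2 = ∑ i, ‖x i‖ ^ 2 := by
      rw [hrdef, EuclideanSpace.norm_eq, Real.sq_sqrt (by positivity)]
    simpa [Fin.sum_univ_two, Real.norm_eq_abs, sq_abs] using h1.symm
  have hx0 : |x 0| ≤ r := by nlinarith [sq_abs (x 0), abs_nonneg (x 0), sq_nonneg (x 1)]
  have hx1 : |x 1| ≤ r := by nlinarith [sq_abs (x 1), abs_nonneg (x 1), sq_nonneg (x 0)]
  have htwo : ∀ i : Fin 2, i = 0 ∨ i = 1 := by decide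
  set ω : Fin 2 → ℝ := fun i => x i / r with hωdef
  set e : Fin 2 → ℝ := ![x 1 / r, -(x 0 / r)] with hedef
  have hdiv : ∀ s : ℝ, |s| ≤ r → |s / r| ≤ 1 := by
    intro s hs
    rw [abs_div, abs_of_pos hr, div_le_one hr]; exact hs
  have hω1 : ∀ i : Fin 2, |ω i| ≤ 1 := by
    intro i
    rcases htwo i with rfl | rfl
    · exact hdiv _ hx0
    · exact hdiv _ hx1
  have he1 : ∀ i : Fin 2, |e i| ≤ 1 := by
    intro i
    rcases htwo i with rfl | rfl
    · simpa [hedef] using hdiv _ hx1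
    · simpa [hedef, abs_neg] using hdiv _ hx0
  have hω2 : ω 0 ^ 2 + ω 1 ^ 2 = 1 := by
    rw [hωdef]; field_simp; linarith [hr2]
  have hdec : ∀ u : Fin 2 → ℝ, ∀ i : Fin 2,
      u i = ((x 0 * u 0 + x 1 * u 1) / r) * ω i + ((x 1 * u 0 - x 0 * u 1) / r) * e i := by
    intro u i
    rcases htwo i with rfl | rfl
    · simp only [hωdef, hedef, Matrix.cons_val_zero]
      field_simp
      linear_combination (-(u 0)) * hr2
    · simp only [hωdef, hedef, Matrix.cons_val_one, Matrix.head_cons, Matrix.cons_val_zero]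
      field_simp
      linear_combination (-(u 1)) * hr2
  -- main quantified estimate
  have hNle : ∀ u : Fin 2 → ℝ, ∀ i, |u i| ≤ max |u 0| |u 1| := by
    intro u i
    rcases htwo i with rfl | rfl
    · exact le_max_left _ _
    · exact le_max_right _ _
  have hNnn : ∀ u : Fin 2 → ℝ, 0 ≤ max |u 0| |u 1| := fun u =>
    le_trans (abs_nonneg _) (le_max_left _ _)
  have hqj : ∀ u : Fin 2 → ℝ, |(x 1 * u 0 - x 0 * u 1) / r| = |x 1 * u 0 - x 0 * u 1| / r := by
    intro u; rw [abs_div, abs_of_pos hr]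
  have hpj : ∀ u : Fin 2 → ℝ, |(x 0 * u 0 + x 1 * u 1) / r| ≤ 2 * max |u 0| |u 1| := by
    intro u
    have h1 : |x 0 * u 0 + x 1 * u 1| ≤ r * max |u 0| |u 1| + r * max |u 0| |u 1| :=
      calc |x 0 * u 0 + x 1 * u 1| ≤ |x 0 * u 0| + |x 1 * u 1| := abs_add_le _ _
        _ = |x 0| * |u 0| + |x 1| * |u 1| := by rw [abs_mul, abs_mul]
        _ ≤ r * max |u 0| |u 1| + r * max |u 0| |u 1| :=
            add_le_add (mul_le_mul hx0 (hNle u 0) (abs_nonneg _) hr.le)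
              (mul_le_mul hx1 (hNle u 1) (abs_nonneg _) hr.le)
    rw [abs_div, abs_of_pos hr, div_le_iff₀ hr]
    nlinarith [h1]
  have main : ∀ u1 u2 u3 u4 : Fin 2 → ℝ,
      |Tform h u1 u2 u3 u4| ≤ (8 * M + 1) * r⁻¹ *
        (|x 1 * u1 0 - x 0 * u1 1| * max |u2 0| |u2 1| * max |u3 0| |u3 1| * max |u4 0| |u4 1|
         + max |u1 0| |u1 1| * |x 1 * u2 0 - x 0 * u2 1| * max |u3 0| |u3 1| * max |u4 0| |u4 1|
         + max |u1 0| |u1 1| * max |u2 0| |u2 1| * |x 1 * u3 0 - x 0 * u3 1| * max |u4 0| |u4 1|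
         + max |u1 0| |u1 1| * max |u2 0| |u2 1| * max |u3 0| |u3 1| * |x 1 * u4 0 - x 0 * u4 1|) := by
    intro u1 u2 u3 u4
    set N1 : ℝ := max |u1 0| |u1 1| with hN1
    set N2 : ℝ := max |u2 0| |u2 1| with hN2
    set N3 : ℝ := max |u3 0| |u3 1| with hN3
    set N4 : ℝ := max |u4 0| |u4 1| with hN4
    set O1 : ℝ := |x 1 * u1 0 - x 0 * u1 1| with hO1
    set O2 : ℝ := |x 1 * u2 0 - x 0 * u2 1| with hO2
    set O3 : ℝ := |x 1 * u3 0 - x 0 * u3 1| with hO3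
    set O4 : ℝ := |x 1 * u4 0 - x 0 * u4 1| with hO4
    set p1 : ℝ := (x 0 * u1 0 + x 1 * u1 1) / r with hp1
    set p2 : ℝ := (x 0 * u2 0 + x 1 * u2 1) / r with hp2
    set p3 : ℝ := (x 0 * u3 0 + x 1 * u3 1) / r with hp3
    set p4 : ℝ := (x 0 * u4 0 + x 1 * u4 1) / r with hp4
    set q1 : ℝ := (x 1 * u1 0 - x 0 * u1 1) / r with hq1
    set q2 : ℝ := (x 1 * u2 0 - x 0 * u2 1) / r with hq2
    set q3 : ℝ := (x 1 * u3 0 - x 0 * u3 1) / r with hq3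
    set q4 : ℝ := (x 1 * u4 0 - x 0 * u4 1) / r with hq4
    have h00 : Tform h ω ω ω ω = 0 := hnull ω hω2
    have hreg := Tform_expand h ω e u1 u2 u3 u4 p1 q1 p2 q2 p3 q3 p4 q4
      (hdec u1) (hdec u2) (hdec u3) (hdec u4)
    have hsplit : Tform h u1 u2 u3 u4 =
        Tform h (fun i => q1 * e i) u2 u3 u4
        + Tform h (fun i => p1 * ω i) (fun i => q2 * e i) u3 u4
        + Tform h (fun i => p1 * ω i) (fun i => p2 * ω i) (fun i => q3 * e i) u4
        + Tform h (fun i => p1 * ω i) (fun i => p2 * ω i) (fun i => p3 * ω i)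
            (fun i => q4 * e i) := by
      rw [hreg, h00]; ring
    -- bounds on scaled vectors
    have hqe : ∀ (u : Fin 2 → ℝ) (i : Fin 2),
        |((x 1 * u 0 - x 0 * u 1) / r) * e i| ≤ |x 1 * u 0 - x 0 * u 1| / r := by
      intro u i
      rw [abs_mul]
      calc |(x 1 * u 0 - x 0 * u 1) / r| * |e i|
          ≤ (|x 1 * u 0 - x 0 * u 1| / r) * 1 :=
            mul_le_mul (le_of_eq (hqj u)) (he1 i) (abs_nonneg _)
              (div_nonneg (abs_nonneg _) hr.le)
        _ = |x 1 * u 0 - x 0 * u 1| / r := mul_one _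
    have hpω : ∀ (u : Fin 2 → ℝ) (i : Fin 2),
        |((x 0 * u 0 + x 1 * u 1) / r) * ω i| ≤ 2 * max |u 0| |u 1| := by
      intro u i
      rw [abs_mul]
      calc |(x 0 * u 0 + x 1 * u 1) / r| * |ω i|
          ≤ (2 * max |u 0| |u 1|) * 1 :=
            mul_le_mul (hpj u) (hω1 i) (abs_nonneg _)
              (by have := hNnn u; linarith)
        _ = 2 * max |u 0| |u 1| := mul_one _
    have hT1 : |Tform h (fun i => q1 * e i) u2 u3 u4| ≤ M * (O1 / r * N2 * N3 * N4) := by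
      have := Tform_bound h (fun i => q1 * e i) u2 u3 u4 (O1 / r) N2 N3 N4
        (hqe u1) (hNle u2) (hNle u3) (hNle u4)
      calc |Tform h (fun i => q1 * e i) u2 u3 u4| ≤ M * (O1 / r * (N2 * (N3 * N4))) := by
            rw [hMdef]; convert this using 2; ring
        _ = M * (O1 / r * N2 * N3 * N4) := by ring
    have hT2 : |Tform h (fun i => p1 * ω i) (fun i => q2 * e i) u3 u4| ≤
        M * (2 * N1 * (O2 / r) * N3 * N4) := by
      have := Tform_bound h (fun i => p1 * ω i) (fun i => q2 * e i) u3 u4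
        (2 * N1) (O2 / r) N3 N4 (hpω u1) (hqe u2) (hNle u3) (hNle u4)
      calc |Tform h (fun i => p1 * ω i) (fun i => q2 * e i) u3 u4|
          ≤ M * (2 * N1 * (O2 / r * (N3 * N4))) := by
            rw [hMdef]; convert this using 2; ring
        _ = M * (2 * N1 * (O2 / r) * N3 * N4) := by ring
    have hT3 : |Tform h (fun i => p1 * ω i) (fun i => p2 * ω i) (fun i => q3 * e i) u4| ≤
        M * (2 * N1 * (2 * N2) * (O3 / r) * N4) := by
      have := Tform_bound h (fun i => p1 * ω i) (fun i => p2 * ω i) (fun i => q3 * e i) u4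
        (2 * N1) (2 * N2) (O3 / r) N4 (hpω u1) (hpω u2) (hqe u3) (hNle u4)
      calc |Tform h (fun i => p1 * ω i) (fun i => p2 * ω i) (fun i => q3 * e i) u4|
          ≤ M * (2 * N1 * (2 * N2 * (O3 / r * N4))) := by
            rw [hMdef]; convert this using 2; ring
        _ = M * (2 * N1 * (2 * N2) * (O3 / r) * N4) := by ring
    have hT4 : |Tform h (fun i => p1 * ω i) (fun i => p2 * ω i) (fun i => p3 * ω i)
          (fun i => q4 * e i)| ≤ M * (2 * N1 * (2 * N2) * (2 * N3) * (O4 / r)) := by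
      have := Tform_bound h (fun i => p1 * ω i) (fun i => p2 * ω i) (fun i => p3 * ω i)
        (fun i => q4 * e i) (2 * N1) (2 * N2) (2 * N3) (O4 / r)
        (hpω u1) (hpω u2) (hpω u3) (hqe u4)
      calc |Tform h (fun i => p1 * ω i) (fun i => p2 * ω i) (fun i => p3 * ω i)
            (fun i => q4 * e i)|
          ≤ M * (2 * N1 * (2 * N2 * (2 * N3 * (O4 / r)))) := by
            rw [hMdef]; convert this using 2; ring
        _ = M * (2 * N1 * (2 * N2) * (2 * N3) * (O4 / r)) := by ring
    -- nonnegativity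
    have hN1n : 0 ≤ N1 := hNnn u1
    have hN2n : 0 ≤ N2 := hNnn u2
    have hN3n : 0 ≤ N3 := hNnn u3
    have hN4n : 0 ≤ N4 := hNnn u4
    have hO1n : 0 ≤ O1 := abs_nonneg _
    have hO2n : 0 ≤ O2 := abs_nonneg _
    have hO3n : 0 ≤ O3 := abs_nonneg _
    have hO4n : 0 ≤ O4 := abs_nonneg _
    have hrin : 0 ≤ r⁻¹ := inv_nonneg.mpr hr.le
    have hS1 : 0 ≤ r⁻¹ * (O1 * N2 * N3 * N4) := mul_nonneg hrin (mul_nonneg (mul_nonneg (mul_nonneg hO1n hN2n) hN3n) hN4n)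
    have hS2 : 0 ≤ r⁻¹ * (N1 * O2 * N3 * N4) := mul_nonneg hrin (mul_nonneg (mul_nonneg (mul_nonneg hN1n hO2n) hN3n) hN4n)
    have hS3 : 0 ≤ r⁻¹ * (N1 * N2 * O3 * N4) := mul_nonneg hrin (mul_nonneg (mul_nonneg (mul_nonneg hN1n hN2n) hO3n) hN4n)
    have hS4 : 0 ≤ r⁻¹ * (N1 * N2 * N3 * O4) := mul_nonneg hrin (mul_nonneg (mul_nonneg (mul_nonneg hN1n hN2n) hN3n) hO4n)
    have hc : M ≤ 8 * M + 1 := by linarith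
    have hc2 : 2 * M ≤ 8 * M + 1 := by linarith
    have hc4 : 4 * M ≤ 8 * M + 1 := by linarith
    have hc8 : 8 * M ≤ 8 * M + 1 := by linarith
    calc |Tform h u1 u2 u3 u4|
        ≤ |Tform h (fun i => q1 * e i) u2 u3 u4|
          + |Tform h (fun i => p1 * ω i) (fun i => q2 * e i) u3 u4|
          + |Tform h (fun i => p1 * ω i) (fun i => p2 * ω i) (fun i => q3 * e i) u4|
          + |Tform h (fun i => p1 * ω i) (fun i => p2 * ω i) (fun i => p3 * ω i)
              (fun i => q4 * e i)| := by
          rw [hsplit]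
          exact le_trans (abs_add_le _ _) (add_le_add_left (le_trans (abs_add_le _ _)
            (add_le_add_left (abs_add_le _ _) _)) _)
      _ ≤ M * (O1 / r * N2 * N3 * N4) + M * (2 * N1 * (O2 / r) * N3 * N4)
          + M * (2 * N1 * (2 * N2) * (O3 / r) * N4)
          + M * (2 * N1 * (2 * N2) * (2 * N3) * (O4 / r)) :=
          add_le_add (add_le_add (add_le_add hT1 hT2) hT3) hT4
      _ = M * (r⁻¹ * (O1 * N2 * N3 * N4)) + (2 * M) * (r⁻¹ * (N1 * O2 * N3 * N4))
          + (4 * M) * (r⁻¹ * (N1 * N2 * O3 * N4))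
          + (8 * M) * (r⁻¹ * (N1 * N2 * N3 * O4)) := by
          field_simp
          ring
      _ ≤ (8 * M + 1) * (r⁻¹ * (O1 * N2 * N3 * N4))
          + (8 * M + 1) * (r⁻¹ * (N1 * O2 * N3 * N4))
          + (8 * M + 1) * (r⁻¹ * (N1 * N2 * O3 * N4))
          + (8 * M + 1) * (r⁻¹ * (N1 * N2 * N3 * O4)) :=
          add_le_add (add_le_add (add_le_add
            (mul_le_mul_of_nonneg_right hc hS1)
            (mul_le_mul_of_nonneg_right hc2 hS2))
            (mul_le_mul_of_nonneg_right hc4 hS3))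
            (mul_le_mul_of_nonneg_right hc8 hS4)
      _ = (8 * M + 1) * r⁻¹ *
          (O1 * N2 * N3 * N4 + N1 * O2 * N3 * N4 + N1 * N2 * O3 * N4
            + N1 * N2 * N3 * O4) := by ring
  exact main (fun i => xDs i φ x) (fun i => xDs i ψ x) (fun i => xDs i χ x)
    (fun i => xDs i ξ x)

end Paper
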